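/- Under Assumptions 1, 3 (strengthened contractivity), 4–5 and 7, there exists a class-K function λ₁, depending only on n, m, r, N_p and the moduli σ_{x,ia}, σ_{w,ic}, σ_{ℓ,x}, σ_Γ, with the following property: for every x ∈ 𝒳, every θ with θ ≥ ε, every optimal pair (𝐮*,q*) of P_{N_p}(x,θ) with q* > 1, and every w ∈ 𝒲, setting x⁺ := f(x,u*(0),w), θ⁺ := f_θ(x⁺,θ), 𝐮⁺ := (u*(1),…,u*(q*−1)) and q⁺ := q*−1, the pair (𝐮⁺,q⁺) is feasible for x⁺ and V_{N_p}(x⁺,θ⁺,𝐮⁺,q⁺) − V*_{N_p}(x,θ) ≤ −θ·α_ℓ(‖x‖) + (θ + ξ)·λ₁(‖w‖). -/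

import Mathlib

open Pointwise

noncomputable section

abbrev Vec (n : ℕ) := EuclideanSpace ℝ (Fin n)

/-- A class-K function: continuous (on `[0,∞)`), strictly increasing,
nonnegative, vanishing at `0`. -/
def ClassK (α : ℝ → ℝ) : Prop :=
  α 0 = 0 ∧ ContinuousOn α (Set.Ici 0) ∧ StrictMonoOn α (Set.Ici 0) ∧
    ∀ s, 0 ≤ s → 0 ≤ α s

/-- A class-K∞ function: class-K and unbounded. -/
def ClassKInf (α : ℝ → ℝ) : Prop :=
  ClassK α ∧ ∀ M : ℝ, ∃ s, 0 ≤ s ∧ M ≤ α s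

/-- Trajectory of the perturbed system: `φ(j; x, 𝐮, 𝐰)`. -/
def traj {n m r : ℕ} (f : Vec n → Vec m → Vec r → Vec n) (x : Vec n)
    (u : ℕ → Vec m) (w : ℕ → Vec r) : ℕ → Vec n
  | 0 => x
  | j + 1 => f (traj f x u w j) (u j) (w j)

/-- `min_{1 ≤ j ≤ q} g j`. -/
def minIcc (g : ℕ → ℝ) (q : ℕ) : ℝ := sInf (g '' Set.Icc 1 q)

/-- Pontryagin set difference `A ⊖ B`. -/
def pont {n : ℕ} (A B : Set (Vec n)) : Set (Vec n) := {x | ∀ b ∈ B, x + b ∈ A}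

/-- Data of the robust contraction-based MPC problem. -/
structure MPCSetup (n m r : ℕ) where
  /-- system dynamics -/
  f : Vec n → Vec m → Vec r → Vec n
  /-- state constraint set 𝒳 -/
  X : Set (Vec n)
  /-- input constraint set 𝒰 -/
  U : Set (Vec m)
  /-- disturbance bounds w̄ -/
  wbar : Fin r → ℝ
  /-- contractive function Γ -/
  Γ : Vec n → ℝ
  /-- moduli of continuity of f -/
  σx : Fin n → Fin n → ℝ → ℝ
  σu : Fin n → Fin m → ℝ → ℝ
  σw : Fin n → Fin r → ℝ → ℝ
  /-- modulus of continuity of Γ -/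
  σΓ : ℝ → ℝ
  /-- upper bounding K∞ function for Γ -/
  αΓ : ℝ → ℝ
  /-- contraction factor -/
  γ : ℝ
  /-- maximum prediction horizon -/
  Np : ℕ
  /-- the sets ℱ(j) -/
  Fset : ℕ → Set (Vec n)
  /-- the sets ℛ(j) -/
  Rset : ℕ → Set (Vec n)
  /-- stage cost -/
  ℓ : Vec n → Vec m → ℝ
  /-- upper bound on stage cost -/
  ℓbar : ℝ
  /-- lower bounding K function for the stage cost -/
  αℓ : ℝ → ℝ
  /-- moduli of continuity of the stage cost -/
  σℓx : ℝ → ℝ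
  σℓu : ℝ → ℝ
  /-- weight of the contraction term in the cost -/
  ξ : ℝ

namespace MPCSetup

variable {n m r : ℕ}

/-- The disturbance set 𝒲. -/
def W (S : MPCSetup n m r) : Set (Vec r) := {w | ∀ i, |w i| ≤ S.wbar i}

/-- Nominal (disturbance-free) trajectory `φ(j; x, 𝐮, 0)`. -/
def nom (S : MPCSetup n m r) (x : Vec n) (u : ℕ → Vec m) : ℕ → Vec n :=
  traj S.f x u fun _ => (0 : Vec r)

/-- Assumptions 1 (component-wise uniform continuity), 2 (constraint sets),
3 (strengthened contractivity), 4–5 (the sequences ℱ(j), ℛ(j)) and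
7 (stage cost), together with ξ > 0. -/
structure Assumptions (S : MPCSetup n m r) : Prop where
  hX_compact : IsCompact S.X
  hU_compact : IsCompact S.U
  hX_int : (interior S.X).Nonempty
  hU_int : (interior S.U).Nonempty
  -- Assumption 1
  hσx : ∀ i a, ClassK (S.σx i a)
  hσu : ∀ i b, ClassK (S.σu i b)
  hσw : ∀ i c, ClassK (S.σw i c)
  hf_cont : ∀ x ∈ S.X, ∀ u ∈ S.U, ∀ w ∈ S.W, ∀ x' ∈ S.X, ∀ u' ∈ S.U, ∀ w' ∈ S.W, ∀ i,
    |S.f x u w i - S.f x' u' w' i| ≤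
      (∑ a, S.σx i a (|x a - x' a|)) + (∑ b, S.σu i b (|u b - u' b|)) +
        ∑ c, S.σw i c (|w c - w' c|)
  -- Assumption 3 (strengthened contractivity)
  hΓ0 : S.Γ 0 = 0
  hΓpos : ∀ x, x ≠ 0 → 0 < S.Γ x
  hΓnonneg : ∀ x, 0 ≤ S.Γ x
  hσΓ : ClassK S.σΓ
  hΓuc : ∀ x ∈ S.X, ∀ x' ∈ S.X, |S.Γ x - S.Γ x'| ≤ S.σΓ ‖x - x'‖
  hαΓ : ClassKInf S.αΓ
  hΓub : ∀ x ∈ S.X, S.Γ x ≤ S.αΓ ‖x‖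
  hγ : S.γ ∈ Set.Ioo (0 : ℝ) 1
  hNp : 1 ≤ S.Np
  hcontract : ∀ x ∈ S.X, ∃ u : ℕ → Vec m, (∀ j < S.Np, u j ∈ S.U) ∧
    (∀ j ≤ S.Np, S.nom x u j ∈ pont S.X (S.Rset j)) ∧
    minIcc (fun j => S.Γ (S.nom x u j)) S.Np ≤ S.γ * S.Γ x
  -- Assumptions 4–5
  hF0 : S.Fset 0 = {z | ∀ i, |z i| ≤ ∑ a, S.σw i a (S.wbar a)}
  hR0 : S.Rset 0 = {0}
  hF : ∀ (x : Vec n) (u : ℕ → Vec m), (∀ j, u j ∈ S.U) →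
    (∀ j, S.nom x u j ∈ S.X) →
    ∀ x' : Vec n, x' - x ∈ S.Fset 0 → ∀ j, 1 ≤ j →
      S.nom x' u j ∈ {S.nom x u j} + S.Fset j
  hR : ∀ (x : Vec n) (u : ℕ → Vec m), (∀ j, u j ∈ S.U) →
    (∀ j, S.nom x u j ∈ S.X) →
    ∀ w : ℕ → Vec r, (∀ j, w j ∈ S.W) → ∀ j, 1 ≤ j →
      traj S.f x u w j ∈ {S.nom x u j} + S.Rset j
  hRNp : 0 ∈ pont S.X (S.Rset S.Np)
  hFR : ∀ j, S.Fset j + S.Rset j ⊆ S.Rset (j + 1)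
  -- Assumption 7
  hℓbar : 0 < S.ℓbar
  hℓ_bounds : ∀ x ∈ S.X, ∀ u ∈ S.U, 0 ≤ S.ℓ x u ∧ S.ℓ x u ≤ S.ℓbar
  hαℓ : ClassK S.αℓ
  hℓ_lb : ∀ x ∈ S.X, ∀ u ∈ S.U, S.αℓ ‖x‖ ≤ S.ℓ x u
  hσℓx : ClassK S.σℓx
  hσℓu : ClassK S.σℓu
  hℓ_uc : ∀ x ∈ S.X, ∀ u ∈ S.U, ∀ x' ∈ S.X, ∀ u' ∈ S.U,
    |S.ℓ x u - S.ℓ x' u'| ≤ S.σℓx ‖x - x'‖ + S.σℓu ‖u - u'‖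
  hξ : 0 < S.ξ

/-- A pair (𝐮, q) is feasible for `P_{N_p}(x, θ)`. -/
def Feasible (S : MPCSetup n m r) (x : Vec n) (u : ℕ → Vec m) (q : ℕ) : Prop :=
  q ∈ Set.Icc 1 S.Np ∧ (∀ j < q, u j ∈ S.U) ∧
    ∀ j ≤ q, S.nom x u j ∈ pont S.X (S.Rset j)

/-- Cost `V_{N_p}(x, θ, 𝐮, q)`. -/
def cost (S : MPCSetup n m r) (x : Vec n) (θ : ℝ) (u : ℕ → Vec m) (q : ℕ) : ℝ :=
  θ * ∑ j ∈ Finset.range q, S.ℓ (S.nom x u j) (u j) +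
    S.ξ * minIcc (fun j => S.Γ (S.nom x u j)) q

/-- Optimal value `V*_{N_p}(x, θ)`. -/
def Vstar (S : MPCSetup n m r) (x : Vec n) (θ : ℝ) : ℝ :=
  sInf {c | ∃ u q, S.Feasible x u q ∧ c = S.cost x θ u q}

/-- An optimal pair: a feasible pair attaining the optimal value, with the
smallest horizon among all feasible minimizers. -/
def OptimalPair (S : MPCSetup n m r) (x : Vec n) (θ : ℝ) (u : ℕ → Vec m) (q : ℕ) : Prop :=
  S.Feasible x u q ∧ S.cost x θ u q = S.Vstar x θ ∧
    ∀ u' q', S.Feasible x u' q' → S.cost x θ u' q' = S.Vstar x θ → q ≤ q'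

/-- The θ-update rule `f_θ`. -/
def fθ (S : MPCSetup n m r) (ε ν : ℝ) (x : Vec n) (θ' : ℝ) : ℝ :=
  if θ' < S.Γ x then θ' else max ε (ν * S.Γ x)

/-- Additional data: the RCIS Ω, the constant ω and `Γ_max := max_{x ∈ 𝒳} Γ(x)`. -/
structure Ext (S : MPCSetup n m r) where
  Ω : Set (Vec n)
  ω : ℝ
  Γmax : ℝ

/-- Assumption 6 (robust controlled invariant set) together with the
properties of ω and Γ_max. -/
structure ExtAssumptions (S : MPCSetup n m r) (E : S.Ext) : Prop where
  hΩX : E.Ω ⊆ S.X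
  hΩinv : ∀ x ∈ E.Ω, ∃ u ∈ S.U, ∀ w ∈ S.W, S.f x u w ∈ E.Ω
  hΩctrl : ∀ x ∈ E.Ω, ∃ u ∈ S.U, S.f x u 0 ∈ pont S.X (S.Rset 1)
  hΩR1 : 0 ∈ pont E.Ω (S.Rset 1)
  hω : 0 < E.ω
  hωsub : {x | S.Γ x ≤ E.ω} ⊆ pont E.Ω (S.Rset 1)
  hΓmax : IsGreatest (S.Γ '' S.X) E.Γmax
  hΓmax_pos : 0 < E.Γmax

end MPCSetup

/-!
The disturbance moves the successor state away from the nominal one by at most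
`Σ_c σ_{w,ic}(|w_c|)` in each coordinate, a vector of `ℱ(0)`. Assumption 5(i) then keeps
the shifted nominal trajectory within `ℱ(j)` of the old one, and `ℱ(j) ⊕ ℛ(j) ⊆ ℛ(j+1)`
turns the old tightened constraints into the new ones. Quantitatively, the moduli `σ_x`
propagate the initial deviation along the horizon, so each stage cost and the contraction
term move by a class-K function of `‖w‖`. Dropping the first stage gives `-θ α_ℓ(‖x‖)`;
since `q*` is the smallest optimal horizon, the minimum of `Γ` is not attained at the first
step and so survives the shift; and the θ-update never increases `θ`.
-/

lemma EuclideanSpace.norm_le_sum_abs {ι : Type*} [Fintype ι] (z : EuclideanSpace ℝ ι) :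
    ‖z‖ ≤ ∑ i, |z i| := by
  rw [EuclideanSpace.norm_eq, Real.sqrt_le_left (by positivity)]
  simpa only [Real.norm_eq_abs] using
    Finset.sum_sq_le_sq_sum_of_nonneg fun i _ => abs_nonneg (z i)

lemma mem_pont_of_sub_mem {n : ℕ} {A B B' C : Set (Vec n)} {y z : Vec n}
    (hy : y ∈ pont A B') (hCB : C + B ⊆ B') (hz : z - y ∈ C) : z ∈ pont A B := by
  intro b hb
  have h := hy _ (hCB (Set.add_mem_add hz hb))
  rwa [← add_assoc, add_sub_cancel] at h

lemma pont_subset {n : ℕ} {A B : Set (Vec n)} (h0 : (0 : Vec n) ∈ B) : pont A B ⊆ A :=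
  fun y hy => by simpa using hy 0 h0

lemma sub_mem_of_mem_singleton_add {n : ℕ} {s : Set (Vec n)} {y z : Vec n}
    (h : z ∈ {y} + s) : z - y ∈ s := by
  rw [Set.singleton_add] at h
  obtain ⟨d, hd, rfl⟩ := h
  simpa using hd

/-- Unlike `ClassK`, this is closed under empty sums. -/
structure WeakClassK (g : ℝ → ℝ) : Prop where
  map_zero : g 0 = 0
  continuousOn : ContinuousOn g (Set.Ici 0)
  monotoneOn : MonotoneOn g (Set.Ici 0)
  nonneg : ∀ s, 0 ≤ s → 0 ≤ g s

lemma ClassK.weakClassK {α : ℝ → ℝ} (h : ClassK α) : WeakClassK α :=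
  ⟨h.1, h.2.1, h.2.2.1.monotoneOn, h.2.2.2⟩

namespace WeakClassK

variable {g h : ℝ → ℝ}

lemma mono (hg : WeakClassK g) {s t : ℝ} (hs : 0 ≤ s) (hst : s ≤ t) : g s ≤ g t :=
  hg.monotoneOn hs (hs.trans hst) hst

lemma comp (hg : WeakClassK g) (hh : WeakClassK h) : WeakClassK (g ∘ h) where
  map_zero := by simp [hh.map_zero, hg.map_zero]
  continuousOn := hg.continuousOn.comp hh.continuousOn hh.nonneg
  monotoneOn _ ha _ hb hab :=
    hg.monotoneOn (hh.nonneg _ ha) (hh.nonneg _ hb) (hh.monotoneOn ha hb hab)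
  nonneg s hs := hg.nonneg _ (hh.nonneg s hs)

lemma iterate (hg : WeakClassK g) (k : ℕ) : WeakClassK g^[k] := by
  induction k with
  | zero => exact ⟨rfl, continuousOn_id, monotoneOn_id, fun _ hs => hs⟩
  | succ k ih => rw [Function.iterate_succ']; exact hg.comp ih

lemma sum {ι : Type*} (s : Finset ι) {G : ι → ℝ → ℝ}
    (hG : ∀ i ∈ s, WeakClassK (G i)) : WeakClassK fun t => ∑ i ∈ s, G i t where
  map_zero := Finset.sum_eq_zero fun i hi => (hG i hi).map_zero
  continuousOn := continuousOn_finsetSum s fun i hi => (hG i hi).continuousOn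
  monotoneOn _ ha _ hb hab := Finset.sum_le_sum fun i hi => (hG i hi).monotoneOn ha hb hab
  nonneg t ht := Finset.sum_nonneg fun i hi => (hG i hi).nonneg t ht

lemma add (hg : WeakClassK g) (hh : WeakClassK h) : WeakClassK fun s => g s + h s where
  map_zero := by simp [hg.map_zero, hh.map_zero]
  continuousOn := hg.continuousOn.add hh.continuousOn
  monotoneOn _ ha _ hb hab := add_le_add (hg.monotoneOn ha hb hab) (hh.monotoneOn ha hb hab)
  nonneg s hs := add_nonneg (hg.nonneg s hs) (hh.nonneg s hs)

lemma const_mul (hg : WeakClassK g) {c : ℝ} (hc : 0 ≤ c) : WeakClassK fun s => c * g s where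
  map_zero := by simp [hg.map_zero]
  continuousOn := continuousOn_const.mul hg.continuousOn
  monotoneOn _ ha _ hb hab := mul_le_mul_of_nonneg_left (hg.monotoneOn ha hb hab) hc
  nonneg s hs := mul_nonneg hc (hg.nonneg s hs)

lemma classK_id_add (hg : WeakClassK g) : ClassK fun s => s + g s :=
  ⟨by simp [hg.map_zero], continuousOn_id.add hg.continuousOn,
    fun _ ha _ hb hab => add_lt_add_of_lt_of_le hab (hg.monotoneOn ha hb hab.le),
    fun s hs => add_nonneg hs (hg.nonneg s hs)⟩

end WeakClassK

section minIcc

variable {g h : ℕ → ℝ} {q : ℕ}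

lemma minIcc_le {j : ℕ} (h1 : 1 ≤ j) (h2 : j ≤ q) : minIcc g q ≤ g j :=
  csInf_le ((Set.finite_Icc 1 q).image g).bddBelow ⟨j, ⟨h1, h2⟩, rfl⟩

lemma exists_minIcc_eq (hq : 1 ≤ q) : ∃ j ∈ Set.Icc 1 q, g j = minIcc g q :=
  Set.Nonempty.csInf_mem (s := g '' Set.Icc 1 q) ⟨g 1, 1, ⟨le_rfl, hq⟩, rfl⟩
    ((Set.finite_Icc 1 q).image g)

lemma minIcc_one : minIcc g 1 = g 1 := by
  rw [minIcc, Set.Icc_self, Set.image_singleton, csInf_singleton]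

lemma minIcc_le_minIcc_add {c : ℝ} (hq : 1 ≤ q) (hgh : ∀ j ∈ Set.Icc 1 q, g j ≤ h j + c) :
    minIcc g q ≤ minIcc h q + c := by
  obtain ⟨j, hj, hmin⟩ := exists_minIcc_eq (g := h) hq
  exact (minIcc_le hj.1 hj.2).trans (hmin ▸ hgh j hj)

lemma minIcc_succ_le (hq : 1 < q) (hlt : minIcc g q < g 1) :
    minIcc (fun j => g (j + 1)) (q - 1) ≤ minIcc g q := by
  obtain ⟨j, ⟨hj1, hjq⟩, hmin⟩ := exists_minIcc_eq (g := g) hq.le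
  have hj2 : 2 ≤ j := by
    by_contra! hj
    obtain rfl : j = 1 := by omega
    exact hlt.ne' hmin
  calc minIcc (fun j => g (j + 1)) (q - 1) ≤ g (j - 1 + 1) := minIcc_le (by omega) (by omega)
    _ = minIcc g q := by rw [Nat.sub_add_cancel (by omega), hmin]

end minIcc

namespace MPCSetup

variable {n m r : ℕ}

def gainW (S : MPCSetup n m r) (s : ℝ) : ℝ := ∑ i, ∑ c, S.σw i c s

def gainX (S : MPCSetup n m r) (s : ℝ) : ℝ := ∑ i, ∑ a, S.σx i a s

/-- `gainW` bounds the ℓ¹ deviation caused by one disturbed step and `gainX` its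
amplification per nominal step, so this bounds the deviation over a horizon `≤ N_p`. -/
def errBound (S : MPCSetup n m r) (s : ℝ) : ℝ :=
  ∑ k ∈ Finset.range S.Np, S.gainX^[k] (S.gainW s)

/-- The summand `s` makes `λ₁` strictly increasing. -/
def lam₁ (S : MPCSetup n m r) (s : ℝ) : ℝ :=
  s + (S.Np * S.σℓx (S.errBound s) + S.σΓ (S.errBound s))

variable {S : MPCSetup n m r}

lemma nom_succ (x : Vec n) (u : ℕ → Vec m) (j : ℕ) :
    S.nom x u (j + 1) = S.f (S.nom x u j) (u j) 0 := rfl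

lemma nom_congr {x : Vec n} {u u' : ℕ → Vec m} {j : ℕ} (h : ∀ k < j, u k = u' k) :
    S.nom x u j = S.nom x u' j := by
  induction j with
  | zero => rfl
  | succ j ih => rw [nom_succ, nom_succ, ih fun k hk => h k (by omega), h j (by omega)]

lemma nom_shift (x : Vec n) (u : ℕ → Vec m) (j : ℕ) :
    S.nom (S.f x (u 0) 0) (fun k => u (k + 1)) j = S.nom x u (j + 1) := by
  induction j with
  | zero => rfl
  | succ j ih => rw [nom_succ, nom_succ, ih]

lemma zero_mem_W_of_mem {w : Vec r} (hw : w ∈ S.W) : (0 : Vec r) ∈ S.W :=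
  fun i => by simpa using (abs_nonneg _).trans (hw i)

lemma exists_admissible_extension (hstep : ∀ y ∈ S.X, ∃ v ∈ S.U, S.f y v 0 ∈ S.X)
    {x : Vec n} {u : ℕ → Vec m} {q : ℕ} (hU : ∀ j < q, u j ∈ S.U)
    (hX : ∀ j ≤ q, S.nom x u j ∈ S.X) :
    ∃ u' : ℕ → Vec m, (∀ j < q, u' j = u j) ∧ (∀ j, u' j ∈ S.U) ∧
      ∀ j, S.nom x u' j ∈ S.X := by
  choose κ hκ using fun y => (em (y ∈ S.X)).elim
    (fun hy => (hstep y hy).imp fun v hv => fun _ => hv)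
    (fun hy => ⟨(0 : Vec m), fun h => absurd h hy⟩)
  let Q : ℕ → Vec n := fun k => Nat.rec x (fun k y => S.f y (if k < q then u k else κ y) 0) k
  have hQ : ∀ k, S.nom x (fun k => if k < q then u k else κ (Q k)) k = Q k := by
    intro k
    induction k with
    | zero => rfl
    | succ k ih => rw [nom_succ, ih]
  have hQu : ∀ k ≤ q, Q k = S.nom x u k := by
    intro k
    induction k with
    | zero => intro; rfl
    | succ k ih =>
      intro hk
      change S.f (Q k) (if k < q then u k else κ (Q k)) 0 = _
      rw [if_pos (by omega), ih (by omega), nom_succ]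
  have hQX : ∀ k, Q k ∈ S.X := by
    intro k
    induction k with
    | zero => exact hX 0 (Nat.zero_le _)
    | succ k ih =>
      by_cases hk : k < q
      · rw [hQu _ hk]; exact hX _ hk
      · change S.f (Q k) (if k < q then u k else κ (Q k)) 0 ∈ S.X
        rw [if_neg hk]; exact (hκ _ ih).2
  refine ⟨fun k => if k < q then u k else κ (Q k), fun j hj => if_pos hj, fun k => ?_,
    fun k => hQ k ▸ hQX k⟩
  by_cases hk : k < q
  · simpa [hk] using hU k hk
  · simpa [hk] using (hκ _ (hQX k)).1

lemma Assumptions.zero_mem_Fset_zero (hA : S.Assumptions) (h0W : (0 : Vec r) ∈ S.W) :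
    (0 : Vec n) ∈ S.Fset 0 := by
  rw [hA.hF0]
  intro i
  simpa using Finset.sum_nonneg fun c _ => (hA.hσw i c).2.2.2 _ (by simpa using h0W c)

lemma Assumptions.zero_mem_Rset_one (hA : S.Assumptions) (h0W : (0 : Vec r) ∈ S.W) :
    (0 : Vec n) ∈ S.Rset 1 := by
  simpa using hA.hFR 0 (Set.add_mem_add (hA.zero_mem_Fset_zero h0W) (hA.hR0 ▸ rfl))

lemma Assumptions.exists_admissible_step (hA : S.Assumptions) (h0W : (0 : Vec r) ∈ S.W) :
    ∀ y ∈ S.X, ∃ v ∈ S.U, S.f y v 0 ∈ S.X := by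
  intro y hy
  obtain ⟨v, hvU, hvX, -⟩ := hA.hcontract y hy
  exact ⟨v 0, hvU 0 hA.hNp, pont_subset (hA.zero_mem_Rset_one h0W) (hvX 1 hA.hNp)⟩

/-- With zero disturbance, Assumption 5(ii) forces `0 ∈ ℛ(j)`. -/
lemma Assumptions.zero_mem_Rset (hA : S.Assumptions) (h0W : (0 : Vec r) ∈ S.W) (j : ℕ) :
    (0 : Vec n) ∈ S.Rset j := by
  rcases Nat.eq_zero_or_pos j with rfl | hj
  · rw [hA.hR0]; rfl
  obtain ⟨x, hx⟩ := hA.hX_int.mono interior_subset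
  obtain ⟨u, -, hU, hX⟩ := exists_admissible_extension (hA.exists_admissible_step h0W)
    (x := x) (u := 0) (q := 0) (by simp) fun j hj => by obtain rfl := Nat.le_zero.1 hj; exact hx
  have h := sub_mem_of_mem_singleton_add (hA.hR x u hU hX _ (fun _ => h0W) j hj)
  rwa [show traj S.f x u (fun _ => 0) j = S.nom x u j from rfl, sub_self] at h

lemma Feasible.nom_mem (hA : S.Assumptions) (h0W : (0 : Vec r) ∈ S.W) {x : Vec n}
    {u : ℕ → Vec m} {q j : ℕ} (hf : S.Feasible x u q) (hj : j ≤ q) : S.nom x u j ∈ S.X :=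
  pont_subset (hA.zero_mem_Rset h0W j) (hf.2.2 j hj)

lemma Feasible.stage_nonneg (hA : S.Assumptions) (h0W : (0 : Vec r) ∈ S.W) {x : Vec n}
    {u : ℕ → Vec m} {q j : ℕ} (hf : S.Feasible x u q) (hj : j < q) :
    0 ≤ S.ℓ (S.nom x u j) (u j) :=
  (hA.hℓ_bounds _ (hf.nom_mem hA h0W hj.le) _ (hf.2.1 j hj)).1

lemma Feasible.of_le {x : Vec n} {u : ℕ → Vec m} {q q' : ℕ} (hf : S.Feasible x u q)
    (hq' : 1 ≤ q') (hle : q' ≤ q) : S.Feasible x u q' :=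
  ⟨⟨hq', hle.trans hf.1.2⟩, fun j hj => hf.2.1 j (by omega),
    fun j hj => hf.2.2 j (by omega)⟩

lemma Feasible.cost_nonneg (hA : S.Assumptions) (h0W : (0 : Vec r) ∈ S.W) {x : Vec n}
    {u : ℕ → Vec m} {q : ℕ} {θ : ℝ} (hθ : 0 ≤ θ) (hf : S.Feasible x u q) :
    0 ≤ S.cost x θ u q := by
  obtain ⟨j, -, hj⟩ := exists_minIcc_eq (g := fun j => S.Γ (S.nom x u j)) hf.1.1
  rw [cost, ← hj]
  exact add_nonneg
    (mul_nonneg hθ (Finset.sum_nonneg fun j hj => hf.stage_nonneg hA h0W (Finset.mem_range.1 hj)))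
    (mul_nonneg hA.hξ.le (hA.hΓnonneg _))

lemma Vstar_le_cost (hA : S.Assumptions) (h0W : (0 : Vec r) ∈ S.W) {x : Vec n}
    {u : ℕ → Vec m} {q : ℕ} {θ : ℝ} (hθ : 0 ≤ θ) (hf : S.Feasible x u q) :
    S.Vstar x θ ≤ S.cost x θ u q :=
  csInf_le ⟨0, by rintro _ ⟨u', q', hf', rfl⟩; exact hf'.cost_nonneg hA h0W hθ⟩
    ⟨u, q, hf, rfl⟩

/-- If the minimum of `Γ` along an optimal trajectory were attained at `j = 1`, the horizon
`q = 1` would give no larger cost, contradicting the minimality of `q`. -/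
lemma OptimalPair.minIcc_lt (hA : S.Assumptions) (h0W : (0 : Vec r) ∈ S.W) {x : Vec n}
    {θ : ℝ} {u : ℕ → Vec m} {q : ℕ} (hθ : 0 ≤ θ) (hopt : S.OptimalPair x θ u q)
    (hq : 1 < q) :
    minIcc (fun j => S.Γ (S.nom x u j)) q < S.Γ (S.nom x u 1) := by
  by_contra! hge
  have hf1 := hopt.1.of_le le_rfl hq.le
  have hle : S.cost x θ u 1 ≤ S.cost x θ u q := by
    have hsum : ∑ j ∈ Finset.range 1, S.ℓ (S.nom x u j) (u j) ≤
        ∑ j ∈ Finset.range q, S.ℓ (S.nom x u j) (u j) :=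
      Finset.sum_le_sum_of_subset_of_nonneg (Finset.range_subset_range.2 hq.le)
        fun j hj _ => hopt.1.stage_nonneg hA h0W (Finset.mem_range.1 hj)
    rw [cost, cost, minIcc_one]
    gcongr
    exact hA.hξ.le
  have heq : S.cost x θ u 1 = S.Vstar x θ :=
    le_antisymm (hopt.2.1 ▸ hle) (Vstar_le_cost hA h0W hθ hf1)
  exact absurd (hopt.2.2 u 1 hf1 heq) (by omega)

lemma fθ_le {ε ν θ : ℝ} {y : Vec n} (hΓ : 0 ≤ S.Γ y) (hε : ε ≤ θ) (hν : ν ≤ 1) :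
    S.fθ ε ν y θ ≤ θ := by
  unfold fθ
  split_ifs with h
  · exact le_rfl
  · exact max_le hε ((mul_le_of_le_one_left hΓ hν).trans (not_lt.1 h))

lemma Assumptions.weakClassK_gainW (hA : S.Assumptions) : WeakClassK S.gainW :=
  WeakClassK.sum _ fun i _ => WeakClassK.sum _ fun c _ => (hA.hσw i c).weakClassK

lemma Assumptions.weakClassK_gainX (hA : S.Assumptions) : WeakClassK S.gainX :=
  WeakClassK.sum _ fun i _ => WeakClassK.sum _ fun a _ => (hA.hσx i a).weakClassK

lemma Assumptions.weakClassK_errBound (hA : S.Assumptions) : WeakClassK S.errBound :=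
  WeakClassK.sum _ fun k _ => (hA.weakClassK_gainX.iterate k).comp hA.weakClassK_gainW

lemma Assumptions.lam₁_classK (hA : S.Assumptions) : ClassK S.lam₁ :=
  (((hA.hσℓx.weakClassK.comp hA.weakClassK_errBound).const_mul (Nat.cast_nonneg _)).add
    (hA.hσΓ.weakClassK.comp hA.weakClassK_errBound)).classK_id_add

lemma Assumptions.abs_f_sub_f_zero_le (hA : S.Assumptions) (h0W : (0 : Vec r) ∈ S.W)
    {y : Vec n} (hy : y ∈ S.X) {v : Vec m} (hv : v ∈ S.U) {w : Vec r} (hw : w ∈ S.W)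
    (i : Fin n) : |S.f y v w i - S.f y v 0 i| ≤ ∑ c, S.σw i c |w c| := by
  simpa [fun a => (hA.hσx i a).1, fun b => (hA.hσu i b).1] using
    hA.hf_cont y hy v hv w hw y hy v hv 0 h0W i

lemma Assumptions.f_sub_f_zero_mem_Fset_zero (hA : S.Assumptions) (h0W : (0 : Vec r) ∈ S.W)
    {y : Vec n} (hy : y ∈ S.X) {v : Vec m} (hv : v ∈ S.U) {w : Vec r} (hw : w ∈ S.W) :
    S.f y v w - S.f y v 0 ∈ S.Fset 0 := by
  rw [hA.hF0]
  intro i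
  exact (hA.abs_f_sub_f_zero_le h0W hy hv hw i).trans
    (Finset.sum_le_sum fun c _ => (hA.hσw i c).weakClassK.mono (abs_nonneg _) (hw c))

lemma Assumptions.sum_abs_f_sub_f_zero_le (hA : S.Assumptions) (h0W : (0 : Vec r) ∈ S.W)
    {y : Vec n} (hy : y ∈ S.X) {v : Vec m} (hv : v ∈ S.U) {w : Vec r} (hw : w ∈ S.W) :
    ∑ i, |S.f y v w i - S.f y v 0 i| ≤ S.gainW ‖w‖ :=
  Finset.sum_le_sum fun i _ => (hA.abs_f_sub_f_zero_le h0W hy hv hw i).trans <|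
    Finset.sum_le_sum fun c _ => (hA.hσw i c).weakClassK.mono (abs_nonneg _)
      (by simpa using PiLp.norm_apply_le w c)

lemma Assumptions.sum_abs_f_sub_f_le (hA : S.Assumptions) (h0W : (0 : Vec r) ∈ S.W)
    {y y' : Vec n} (hy : y ∈ S.X) (hy' : y' ∈ S.X) {v : Vec m} (hv : v ∈ S.U) :
    ∑ i, |S.f y v 0 i - S.f y' v 0 i| ≤ S.gainX (∑ a, |y a - y' a|) := by
  refine Finset.sum_le_sum fun i _ => ?_
  have h := hA.hf_cont y hy v hv 0 h0W y' hy' v hv 0 h0W i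
  simp only [sub_self, abs_zero, fun b => (hA.hσu i b).1, fun c => (hA.hσw i c).1,
    Finset.sum_const_zero, add_zero] at h
  refine h.trans (Finset.sum_le_sum fun a _ => (hA.hσx i a).weakClassK.mono (abs_nonneg _) ?_)
  exact Finset.single_le_sum (f := fun a => |y a - y' a|) (fun _ _ => abs_nonneg _)
    (Finset.mem_univ a)

lemma Assumptions.sum_abs_nom_sub_nom_le (hA : S.Assumptions) (h0W : (0 : Vec r) ∈ S.W)
    {y y' : Vec n} {v : ℕ → Vec m} {N : ℕ} (hv : ∀ k < N, v k ∈ S.U)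
    (hy : ∀ k < N, S.nom y v k ∈ S.X) (hy' : ∀ k < N, S.nom y' v k ∈ S.X) :
    ∑ i, |S.nom y v N i - S.nom y' v N i| ≤ S.gainX^[N] (∑ i, |y i - y' i|) := by
  induction N with
  | zero => exact le_rfl
  | succ N ih =>
    rw [nom_succ, nom_succ, Function.iterate_succ_apply']
    refine (hA.sum_abs_f_sub_f_le h0W (hy N N.lt_succ_self) (hy' N N.lt_succ_self)
      (hv N N.lt_succ_self)).trans (hA.weakClassK_gainX.mono (by positivity) ?_)
    exact ih (fun k hk => hv k (by omega)) (fun k hk => hy k (by omega))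
      (fun k hk => hy' k (by omega))

section Shift

variable {x : Vec n} {u : ℕ → Vec m} {q : ℕ} {w : Vec r}

/-- Assumption 5(i) only speaks about inputs admissible for all time, hence the extension of
`u` beyond the horizon `q`. -/
lemma Assumptions.nom_shift_sub_mem_Fset (hA : S.Assumptions) (hx : x ∈ S.X)
    (hf : S.Feasible x u q) (hw : w ∈ S.W) {j : ℕ} (hj : j < q) :
    S.nom (S.f x (u 0) w) (fun k => u (k + 1)) j - S.nom x u (j + 1) ∈ S.Fset j := by
  have h0W := zero_mem_W_of_mem hw
  have hu0 : u 0 ∈ S.U := hf.2.1 0 (by omega)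
  rcases Nat.eq_zero_or_pos j with rfl | hj0
  · exact hA.f_sub_f_zero_mem_Fset_zero h0W hx hu0 hw
  obtain ⟨û, hûu, hûU, hûX⟩ :=
    exists_admissible_extension (hA.exists_admissible_step h0W) hf.2.1
      fun j hj => hf.nom_mem hA h0W hj
  have hF := hA.hF (S.f x (û 0) 0) (fun k => û (k + 1)) (fun k => hûU _)
    (fun k => nom_shift x û k ▸ hûX _) (S.f x (u 0) w)
    (by rw [hûu 0 (by omega)]; exact hA.f_sub_f_zero_mem_Fset_zero h0W hx hu0 hw) j hj0
  rw [nom_shift, nom_congr (u := û) (u' := u) fun k hk => hûu k (by omega),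
    nom_congr (u := fun k => û (k + 1)) (u' := fun k => u (k + 1))
      fun k hk => hûu (k + 1) (by omega)] at hF
  exact sub_mem_of_mem_singleton_add hF

lemma Assumptions.feasible_shift (hA : S.Assumptions) (hx : x ∈ S.X) (hf : S.Feasible x u q)
    (hq : 1 < q) (hw : w ∈ S.W) : S.Feasible (S.f x (u 0) w) (fun j => u (j + 1)) (q - 1) := by
  have hqN := hf.1.2
  refine ⟨⟨by omega, by omega⟩, fun j hj => hf.2.1 (j + 1) (by omega), fun j hj => ?_⟩
  exact mem_pont_of_sub_mem (hf.2.2 (j + 1) (by omega)) (hA.hFR j)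
    (hA.nom_shift_sub_mem_Fset hx hf hw (by omega))

lemma Assumptions.norm_nom_shift_sub_le (hA : S.Assumptions) (hx : x ∈ S.X)
    (hf : S.Feasible x u q) (hq : 1 < q) (hw : w ∈ S.W) {j : ℕ} (hj : j < q) :
    ‖S.nom (S.f x (u 0) w) (fun k => u (k + 1)) j - S.nom x u (j + 1)‖ ≤
      S.errBound ‖w‖ := by
  have h0W := zero_mem_W_of_mem hw
  have hfs := hA.feasible_shift hx hf hq hw
  have hu0 : u 0 ∈ S.U := hf.2.1 0 (by omega)
  have hqN := hf.1.2
  rw [← nom_shift x u j]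
  calc _ ≤ ∑ i, |S.nom (S.f x (u 0) w) (fun k => u (k + 1)) j i -
        S.nom (S.f x (u 0) 0) (fun k => u (k + 1)) j i| := EuclideanSpace.norm_le_sum_abs _
    _ ≤ S.gainX^[j] (∑ i, |S.f x (u 0) w i - S.f x (u 0) 0 i|) :=
      hA.sum_abs_nom_sub_nom_le h0W (fun k hk => hf.2.1 _ (by omega))
        (fun k hk => hfs.nom_mem hA h0W (by omega))
        (fun k hk => nom_shift x u k ▸ hf.nom_mem hA h0W (by omega))
    _ ≤ S.gainX^[j] (S.gainW ‖w‖) :=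
      (hA.weakClassK_gainX.iterate j).mono (by positivity)
        (hA.sum_abs_f_sub_f_zero_le h0W hx hu0 hw)
    _ ≤ S.errBound ‖w‖ :=
      Finset.single_le_sum (f := fun k => S.gainX^[k] (S.gainW ‖w‖))
        (fun k _ => (hA.weakClassK_gainX.iterate k).nonneg _
          (hA.weakClassK_gainW.nonneg _ (norm_nonneg w)))
        (Finset.mem_range.2 (by omega))

lemma Assumptions.sum_stage_shift_le (hA : S.Assumptions) (hx : x ∈ S.X)
    (hf : S.Feasible x u q) (hq : 1 < q) (hw : w ∈ S.W) :
    ∑ j ∈ Finset.range (q - 1),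
        S.ℓ (S.nom (S.f x (u 0) w) (fun k => u (k + 1)) j) (u (j + 1)) ≤
      ∑ j ∈ Finset.range q, S.ℓ (S.nom x u j) (u j) - S.ℓ x (u 0) +
        S.Np * S.σℓx (S.errBound ‖w‖) := by
  have h0W := zero_mem_W_of_mem hw
  have hfs := hA.feasible_shift hx hf hq hw
  have hterm : ∀ j < q - 1,
      S.ℓ (S.nom (S.f x (u 0) w) (fun k => u (k + 1)) j) (u (j + 1)) ≤
        S.ℓ (S.nom x u (j + 1)) (u (j + 1)) + S.σℓx (S.errBound ‖w‖) := by
    intro j hj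
    have h := hA.hℓ_uc _ (hfs.nom_mem hA h0W hj.le) _ (hf.2.1 (j + 1) (by omega))
      _ (hf.nom_mem hA h0W (j := j + 1) (by omega)) _ (hf.2.1 (j + 1) (by omega))
    rw [sub_self, norm_zero, hA.hσℓu.1, add_zero] at h
    linarith [(le_abs_self _).trans h, hA.hσℓx.weakClassK.mono (norm_nonneg _)
      (hA.norm_nom_shift_sub_le hx hf hq hw (by omega : j < q))]
  have hsplit := Finset.sum_range_succ' (fun j => S.ℓ (S.nom x u j) (u j)) (q - 1)
  rw [Nat.sub_add_cancel hq.le] at hsplit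
  change _ = _ + S.ℓ x (u 0) at hsplit
  have hhor : ((q - 1 : ℕ) : ℝ) ≤ S.Np := by exact_mod_cast (by have := hf.1.2; omega)
  have hσ := hA.hσℓx.2.2.2 _ (hA.weakClassK_errBound.nonneg _ (norm_nonneg w))
  calc _ ≤ ∑ j ∈ Finset.range (q - 1),
        (S.ℓ (S.nom x u (j + 1)) (u (j + 1)) + S.σℓx (S.errBound ‖w‖)) :=
      Finset.sum_le_sum fun j hj => hterm j (Finset.mem_range.1 hj)
    _ = ∑ j ∈ Finset.range (q - 1), S.ℓ (S.nom x u (j + 1)) (u (j + 1)) +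
        ((q - 1 : ℕ) : ℝ) * S.σℓx (S.errBound ‖w‖) := by
      rw [Finset.sum_add_distrib, Finset.sum_const, Finset.card_range, nsmul_eq_mul]
    _ ≤ _ := by
      rw [hsplit]
      linarith [mul_le_mul_of_nonneg_right hhor hσ]

lemma Assumptions.minIcc_shift_le (hA : S.Assumptions) (hx : x ∈ S.X)
    (hf : S.Feasible x u q) (hq : 1 < q) (hw : w ∈ S.W)
    (hlt : minIcc (fun j => S.Γ (S.nom x u j)) q < S.Γ (S.nom x u 1)) :
    minIcc (fun j => S.Γ (S.nom (S.f x (u 0) w) (fun k => u (k + 1)) j)) (q - 1) ≤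
      minIcc (fun j => S.Γ (S.nom x u j)) q + S.σΓ (S.errBound ‖w‖) := by
  have h0W := zero_mem_W_of_mem hw
  have hfs := hA.feasible_shift hx hf hq hw
  calc _ ≤ minIcc (fun j => S.Γ (S.nom x u (j + 1))) (q - 1) + S.σΓ (S.errBound ‖w‖) := by
        refine minIcc_le_minIcc_add (by omega) fun j ⟨_, hj⟩ => ?_
        have h := hA.hΓuc _ (hfs.nom_mem hA h0W hj) _ (hf.nom_mem hA h0W (j := j + 1) (by omega))
        linarith [(le_abs_self _).trans h, hA.hσΓ.weakClassK.mono (norm_nonneg _)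
          (hA.norm_nom_shift_sub_le hx hf hq hw (by omega : j < q))]
    _ ≤ _ := by gcongr; exact minIcc_succ_le hq hlt

end Shift

end MPCSetup

/-- Lemma 3, recursive feasibility and cost descent for q* > 1:
there is a class-K function λ₁ such that the shifted pair is feasible for the
successor state and the candidate cost decreases up to a disturbance term. -/
theorem cost_descent_q_gt_one {n m r : ℕ} (S : MPCSetup n m r)
    (hA : S.Assumptions) :
    ∃ lam₁ : ℝ → ℝ, ClassK lam₁ ∧
      ∀ ε ν : ℝ, 0 < ε → ν ∈ Set.Ioo (0 : ℝ) 1 →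
      ∀ x ∈ S.X, ∀ θ : ℝ, ε ≤ θ → ∀ (u : ℕ → Vec m) (q : ℕ),
        S.OptimalPair x θ u q → 1 < q →
        ∀ w ∈ S.W,
          S.Feasible (S.f x (u 0) w) (fun j => u (j + 1)) (q - 1) ∧
            S.cost (S.f x (u 0) w) (S.fθ ε ν (S.f x (u 0) w) θ)
                (fun j => u (j + 1)) (q - 1) - S.Vstar x θ ≤
              -(θ * S.αℓ ‖x‖) + (θ + S.ξ) * lam₁ ‖w‖ := by
  refine ⟨S.lam₁, hA.lam₁_classK, fun ε ν hε hν x hx θ hθ u q hopt hq w hw => ?_⟩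
  have h0W := MPCSetup.zero_mem_W_of_mem hw
  have hθ0 : 0 ≤ θ := hε.le.trans hθ
  have hfs := hA.feasible_shift hx hopt.1 hq hw
  refine ⟨hfs, ?_⟩
  have hstage := hA.sum_stage_shift_le hx hopt.1 hq hw
  have hmin := hA.minIcc_shift_le hx hopt.1 hq hw (hopt.minIcc_lt hA h0W hθ0 hq)
  have hθ_le := MPCSetup.fθ_le (ν := ν) (hA.hΓnonneg (S.f x (u 0) w)) hθ hν.2.le
  have hstage_nonneg := Finset.sum_nonneg fun j hj =>
    hfs.stage_nonneg hA h0W (Finset.mem_range.1 hj)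
  have hℓ0 := hA.hℓ_lb x hx (u 0) (hopt.1.2.1 0 (by omega))
  have hE := hA.weakClassK_errBound.nonneg _ (norm_nonneg w)
  have hσℓ := hA.hσℓx.2.2.2 _ hE
  have hσΓ := hA.hσΓ.2.2.2 _ hE
  have hN : (0 : ℝ) ≤ S.Np := Nat.cast_nonneg _
  rw [← hopt.2.1]
  simp only [MPCSetup.cost, MPCSetup.lam₁]
  linarith [mul_le_mul_of_nonneg_right hθ_le hstage_nonneg, mul_le_mul_of_nonneg_left hstage hθ0,
    mul_le_mul_of_nonneg_left hmin hA.hξ.le, mul_le_mul_of_nonneg_left hℓ0 hθ0,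
    mul_nonneg hθ0 (norm_nonneg w), mul_nonneg hθ0 hσΓ, mul_nonneg hA.hξ.le (norm_nonneg w),
    mul_nonneg hA.hξ.le (mul_nonneg hN hσℓ)]
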